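/- Substitution lemma: (1) if Γ ⊢ t : T is derivable in Add, then for any type variable X and unit type U, Γ[U/X] ⊢ t : T[U/X] is derivable in Add; (2) if Γ, x:U ⊢ t : T and Γ ⊢ v : U are derivable in Add, where v is a value, then Γ ⊢ t[v/x] : T is derivable in Add. -/

import Mathlib

set_option maxHeartbeats 1000000

/-! ## Terms of the non-deterministic call-by-value λ-calculus (de Bruijn indices) -/

inductive Tm : Type
  | var : ℕ → Tm
  | lam : Tm → Tm
  | app : Tm → Tm → Tm
  | add : Tm → Tm → Tm
  | zero : Tm
  deriving DecidableEq

namespace Tm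

/-- Values: variables and abstractions. -/
inductive IsValue : Tm → Prop
  | var (n : ℕ) : IsValue (var n)
  | lam (t : Tm) : IsValue (lam t)

/-- de Bruijn shifting: add `d` to every variable index `≥ c`. -/
def shift (d c : ℕ) : Tm → Tm
  | var n => if n < c then var n else var (n + d)
  | lam t => lam (shift d (c + 1) t)
  | app t u => app (shift d c t) (shift d c u)
  | add t u => add (shift d c t) (shift d c u)
  | zero => zero

/-- Capture-avoiding substitution of the variable `k` by `v` (removing the binder). -/
def subst (k : ℕ) (v : Tm) : Tm → Tm
  | var n => if n = k then shift k 0 v else if k < n then var (n - 1) else var n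
  | lam t => lam (subst (k + 1) v t)
  | app t u => app (subst k v t) (subst k v u)
  | add t u => add (subst k v t) (subst k v u)
  | zero => zero

/-- `ClosedUnder k t`: every free variable of `t` has index `< k`. -/
def ClosedUnder (k : ℕ) : Tm → Prop
  | var n => n < k
  | lam t => ClosedUnder (k + 1) t
  | app t u => ClosedUnder k t ∧ ClosedUnder k u
  | add t u => ClosedUnder k t ∧ ClosedUnder k u
  | zero => True

/-- Closed terms. -/
def Closed (t : Tm) : Prop := ClosedUnder 0 t

end Tm

open Tm

/-- The AC-equivalence on terms: the least congruence making `+`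
associative and commutative (terms are considered modulo `Aeq`). -/
inductive Aeq : Tm → Tm → Prop
  | refl (t : Tm) : Aeq t t
  | symm : Aeq t u → Aeq u t
  | trans : Aeq t u → Aeq u s → Aeq t s
  | comm (t u : Tm) : Aeq (.add t u) (.add u t)
  | assoc (t u s : Tm) : Aeq (.add t (.add u s)) (.add (.add t u) s)
  | lamCongr : Aeq t t' → Aeq (.lam t) (.lam t')
  | appCongr : Aeq t t' → Aeq u u' → Aeq (.app t u) (.app t' u')
  | addCongr : Aeq t t' → Aeq u u' → Aeq (.add t u) (.add t' u')

/-- One-step reduction (the five rewrite rules plus β, closed under all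
contexts, and performed modulo the AC-equivalence of terms). -/
inductive Step : Tm → Tm → Prop
  | distrRight (t u s : Tm) : Step (.app (.add t u) s) (.add (.app t s) (.app u s))
  | distrLeft (t u s : Tm) : Step (.app t (.add u s)) (.add (.app t u) (.app t s))
  | zeroApp (t : Tm) : Step (.app .zero t) .zero
  | appZero (t : Tm) : Step (.app t .zero) .zero
  | addZero (t : Tm) : Step (.add t .zero) t
  | beta (t v : Tm) : IsValue v → Step (.app (.lam t) v) (Tm.subst 0 v t)
  | appLeft : Step t t' → Step (.app t u) (.app t' u)
  | appRight : Step u u' → Step (.app t u) (.app t u')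
  | addLeft : Step t t' → Step (.add t u) (.add t' u)
  | addRight : Step u u' → Step (.add t u) (.add t u')
  | lamCongr : Step t t' → Step (.lam t) (.lam t')
  | ac : Aeq t t' → Step t' u' → Aeq u' u → Step t u

/-- Strong normalisation of a term: accessibility of the inverse reduction. -/
def SN (t : Tm) : Prop := Acc (fun a b => Step b a) t

/-- The set of strongly normalising closed terms. -/
def SNset : Set Tm := {t | Closed t ∧ SN t}

/-- Pseudo-values: abstractions and sums of pseudo-values. -/
inductive PseudoValue : Tm → Prop
  | lam (t : Tm) : PseudoValue (.lam t)
  | add : PseudoValue t → PseudoValue u → PseudoValue (.add t u)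

/-- Neutral terms: closed terms that are not pseudo-values. -/
def Neutral (t : Tm) : Prop := Closed t ∧ ¬ PseudoValue t

/-- The set of one-step reducts of `t`. -/
def Red (t : Tm) : Set Tm := {u | Step t u}

/-- The set of reducts (in any number of steps, including zero) of terms of `S`. -/
def RedStar (S : Set Tm) : Set Tm := {u | ∃ t ∈ S, Relation.ReflTransGen Step t u}

/-- The closure of a set of terms under (CR3). -/
inductive Clo (S : Set Tm) : Tm → Prop
  | base {t : Tm} : t ∈ S → Clo S t
  | step {t : Tm} : Neutral t → (∀ u, Step t u → Clo S u) → Clo S t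

/-- `clo S`: the least set containing `S` and closed under (CR3). -/
def clo (S : Set Tm) : Set Tm := {t | Clo S t}

/-- Reducibility candidates. -/
structure IsCandidate (A : Set Tm) : Prop where
  cr1 : A ⊆ SNset
  cr2 : ∀ t ∈ A, Red t ⊆ A
  cr3 : ∀ t, Neutral t → Red t ⊆ A → t ∈ A

/-- The arrow operator on sets of closed terms. -/
def CArrow (A B : Set Tm) : Set Tm := {t | Closed t ∧ ∀ u ∈ A, Tm.app t u ∈ B}

/-- The sum of two sets of (AC-classes of) terms. -/
def CSum (A B : Set Tm) : Set Tm := {s | ∃ t ∈ A, ∃ u ∈ B, Aeq s (Tm.add t u)}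

/-- The ⊞ operator on reducibility candidates. -/
def CPlus (A B : Set Tm) : Set Tm := clo (CSum A B ∪ A ∪ B)

/-! ## Types of the Add type system -/

mutual
  /-- Unit types. -/
  inductive UTy : Type
    | var : ℕ → UTy
    | arrow : UTy → Ty → UTy
    | all : UTy → UTy

  /-- Types. -/
  inductive Ty : Type
    | unit : UTy → Ty
    | add : Ty → Ty → Ty
    | zero : Ty
end

mutual
  /-- Shifting of type variables in unit types. -/
  def UTy.shift (d c : ℕ) : UTy → UTy
    | .var n => if n < c then .var n else .var (n + d)
    | .arrow U T => .arrow (UTy.shift d c U) (Ty.shift d c T)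
    | .all U => .all (UTy.shift d (c + 1) U)

  /-- Shifting of type variables in types. -/
  def Ty.shift (d c : ℕ) : Ty → Ty
    | .unit U => .unit (UTy.shift d c U)
    | .add T R => .add (Ty.shift d c T) (Ty.shift d c R)
    | .zero => .zero
end

mutual
  /-- Substitution of the (bound) type variable `k` by `V` in a unit type. -/
  def UTy.subst (k : ℕ) (V : UTy) : UTy → UTy
    | .var n => if n = k then UTy.shift k 0 V else if k < n then .var (n - 1) else .var n
    | .arrow U T => .arrow (UTy.subst k V U) (Ty.subst k V T)
    | .all U => .all (UTy.subst (k + 1) V U)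

  /-- Substitution of the (bound) type variable `k` by `V` in a type. -/
  def Ty.subst (k : ℕ) (V : UTy) : Ty → Ty
    | .unit U => .unit (UTy.subst k V U)
    | .add T R => .add (Ty.subst k V T) (Ty.subst k V R)
    | .zero => .zero
end

/-- Iterated substitution `U[V⃗/X⃗]` for a unit type under `|Vs|` quantifiers. -/
def UTy.msubst (Vs : List UTy) (U : UTy) : UTy := Vs.foldl (fun A V => UTy.subst 0 V A) U

/-- Iterated substitution `T[V⃗/X⃗]` for a type under `|Vs|` quantifiers. -/
def Ty.msubst (Vs : List UTy) (T : Ty) : Ty := Vs.foldl (fun A V => Ty.subst 0 V A) T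

mutual
  /-- Substitution of the free type variable `X` (seen at depth `c`) by `V` in a unit type. -/
  def UTy.replAux (X : ℕ) (V : UTy) (c : ℕ) : UTy → UTy
    | .var n => if n = X + c then UTy.shift c 0 V else .var n
    | .arrow U T => .arrow (UTy.replAux X V c U) (Ty.replAux X V c T)
    | .all U => .all (UTy.replAux X V (c + 1) U)

  /-- Substitution of the free type variable `X` (seen at depth `c`) by `V` in a type. -/
  def Ty.replAux (X : ℕ) (V : UTy) (c : ℕ) : Ty → Ty
    | .unit U => .unit (UTy.replAux X V c U)
    | .add T R => .add (Ty.replAux X V c T) (Ty.replAux X V c R)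
    | .zero => .zero
end

/-- Capture-avoiding substitution `U[V/X]` of a free type variable. -/
def UTy.repl (X : ℕ) (V : UTy) (U : UTy) : UTy := UTy.replAux X V 0 U

/-- Capture-avoiding substitution `T[V/X]` of a free type variable. -/
def Ty.repl (X : ℕ) (V : UTy) (T : Ty) : Ty := Ty.replAux X V 0 T

mutual
  /-- Abstraction of the free type variable `X` (at depth `c`), used to form `∀X.U`. -/
  def UTy.absAux (X c : ℕ) : UTy → UTy
    | .var n => if n = X + c then .var c else if c ≤ n then .var (n + 1) else .var n
    | .arrow U T => .arrow (UTy.absAux X c U) (Ty.absAux X c T)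
    | .all U => .all (UTy.absAux X (c + 1) U)

  /-- Abstraction of the free type variable `X` (at depth `c`) in a type. -/
  def Ty.absAux (X c : ℕ) : Ty → Ty
    | .unit U => .unit (UTy.absAux X c U)
    | .add T R => .add (Ty.absAux X c T) (Ty.absAux X c R)
    | .zero => .zero
end

/-- `∀X.U`: universal quantification of the free type variable `X` in `U`. -/
def UTy.genAll (X : ℕ) (U : UTy) : UTy := .all (UTy.absAux X 0 U)

mutual
  /-- `X` occurs free in a unit type. -/
  def UTy.Free (n : ℕ) : UTy → Prop
    | .var m => m = n
    | .arrow U T => UTy.Free n U ∨ Ty.Free n T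
    | .all U => UTy.Free (n + 1) U

  /-- `X` occurs free in a type. -/
  def Ty.Free (n : ℕ) : Ty → Prop
    | .unit U => UTy.Free n U
    | .add T R => Ty.Free n T ∨ Ty.Free n R
    | .zero => False
end

mutual
  /-- Equivalence of unit types (the least congruence making `+` on types
  associative, commutative, with neutral element `𝟘`). -/
  inductive UEq : UTy → UTy → Prop
    | refl (U : UTy) : UEq U U
    | symm : UEq U V → UEq V U
    | trans : UEq U V → UEq V W → UEq U W
    | arrow : UEq U U' → TEq T T' → UEq (.arrow U T) (.arrow U' T')
    | all : UEq U U' → UEq (.all U) (.all U')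

  /-- Equivalence of types: the least congruence such that
  `T+R ≡ R+T`, `T+(R+S) ≡ (T+R)+S` and `T+𝟘 ≡ T`. -/
  inductive TEq : Ty → Ty → Prop
    | refl (T : Ty) : TEq T T
    | symm : TEq T R → TEq R T
    | trans : TEq T R → TEq R S → TEq T S
    | unit : UEq U U' → TEq (.unit U) (.unit U')
    | addCongr : TEq T T' → TEq R R' → TEq (.add T R) (.add T' R')
    | comm (T R : Ty) : TEq (.add T R) (.add R T)
    | assoc (T R S : Ty) : TEq (.add T (.add R S)) (.add (.add T R) S)
    | zero (T : Ty) : TEq (.add T .zero) T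
end

/-- `Σ_{i} T_i`, with the empty sum being `𝟘`. -/
def sumT (Ts : List Ty) : Ty := Ts.foldl Ty.add Ty.zero

/-- `∀X₁.…∀X_k.U`. -/
def allN : ℕ → UTy → UTy
  | 0, U => U
  | k + 1, U => .all (allN k U)

/-- Lifting of type variables in a typing context (for ∀-introduction). -/
def liftCtx (Γ : List UTy) : List UTy := Γ.map (UTy.shift 1 0)

/-! ## The Add type system -/

/-- Typing judgements of the Add type system. -/
inductive Typing : List UTy → Tm → Ty → Prop
  | ax {Γ : List UTy} {n : ℕ} {U : UTy} : Γ[n]? = some U → Typing Γ (.var n) (.unit U)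
  | axZero {Γ : List UTy} : Typing Γ .zero .zero
  | equiv {Γ t T R} : Typing Γ t T → TEq T R → Typing Γ t R
  | arrI {Γ U t T} : Typing (U :: Γ) t T → Typing Γ (.lam t) (.unit (.arrow U T))
  | arrE {Γ t u} {k : ℕ} {U : UTy} {Ts : List Ty} {Vs : List (List UTy)} :
      Ts ≠ [] → Vs ≠ [] → (∀ V ∈ Vs, V.length = k) →
      Typing Γ t (sumT (Ts.map fun Ti => .unit (allN k (.arrow U Ti)))) →
      Typing Γ u (sumT (Vs.map fun Vj => .unit (UTy.msubst Vj U))) →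
      Typing Γ (.app t u)
        (sumT ((Ts.map fun Ti => Vs.map fun Vj => Ty.msubst Vj Ti).flatten))
  | addI {Γ t u T R} : Typing Γ t T → Typing Γ u R → Typing Γ (.add t u) (.add T R)
  | allE {Γ t U} (V : UTy) : Typing Γ t (.unit (.all U)) → Typing Γ t (.unit (UTy.subst 0 V U))
  | allI {Γ t U} : Typing (liftCtx Γ) t (.unit U) → Typing Γ t (.unit (.all U))

/-! ## Interpretation of types by reducibility candidates -/

/-- Extension of a valuation. -/
def consV (A : Set Tm) (ρ : ℕ → Set Tm) : ℕ → Set Tm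
  | 0 => A
  | n + 1 => ρ n

mutual
  /-- Interpretation of unit types. -/
  def interpU : UTy → (ℕ → Set Tm) → Set Tm
    | .var n, ρ => ρ n
    | .arrow U T, ρ => CArrow (interpU U ρ) (interpT T ρ)
    | .all U, ρ => {t | ∀ A : Set Tm, IsCandidate A → t ∈ interpU U (consV A ρ)}

  /-- Interpretation of types. -/
  def interpT : Ty → (ℕ → Set Tm) → Set Tm
    | .unit U, ρ => interpU U ρ
    | .add T R, ρ => CPlus (interpT T ρ) (interpT R ρ)
    | .zero, _ => clo ∅
end

/-- Lifting of a simultaneous substitution under a binder. -/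
def liftSub (σ : ℕ → Tm) : ℕ → Tm
  | 0 => .var 0
  | n + 1 => Tm.shift 1 0 (σ n)

/-- Simultaneous substitution `t_σ` of all free term variables of `t`. -/
def Tm.msubst (σ : ℕ → Tm) : Tm → Tm
  | .var n => σ n
  | .lam t => .lam (Tm.msubst (liftSub σ) t)
  | .app t u => .app (Tm.msubst σ t) (Tm.msubst σ u)
  | .add t u => .add (Tm.msubst σ t) (Tm.msubst σ u)
  | .zero => .zero

/-! ## The relations ⋖ and ≼ on types -/

/-- The relation `⋖` on unit types: `U₁ ⋖ U₂` iff either `U₂ ≡ ∀X.U₁`, or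
`U₁ ≡ ∀X.U'` and `U₂ ≡ U'[V/X]`. -/
inductive SSub : UTy → UTy → Prop
  | gen {U₁ U₂ : UTy} (X : ℕ) : UEq U₂ (UTy.genAll X U₁) → SSub U₁ U₂
  | inst {U₁ U₂ : UTy} (U' V : UTy) : UEq U₁ (.all U') → UEq U₂ (UTy.subst 0 V U') →
      SSub U₁ U₂

/-- The relation `≼`: the reflexive (with respect to `≡`) and transitive
closure of `⋖`, on types. -/
inductive TPre : Ty → Ty → Prop
  | ofEq : TEq T T' → TPre T T'
  | ofSSub {U V : UTy} : SSub U V → TPre (.unit U) (.unit V)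
  | trans : TPre T T' → TPre T' T'' → TPre T T''

/-! ## Trees and the structured type system Add_struct -/

/-- Binary trees with two kinds of leaves: `ℓ`-leaves and `𝟘`-leaves. -/
inductive ATree : Type
  | leaf : ATree
  | zleaf : ATree
  | node : ATree → ATree → ATree
  deriving DecidableEq

namespace ATree

/-- ATree composition: branch a copy of `A'` at each `ℓ`-leaf of `A`. -/
def comp : ATree → ATree → ATree
  | .leaf, A' => A'
  | .zleaf, _ => .zleaf
  | .node A B, A' => .node (comp A A') (comp B A')

/-- `LeafAt A w`: the word `w` (over `{l,r}`, here `{false,true}`) is the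
address of an `ℓ`-leaf of `A`. -/
inductive LeafAt : ATree → List Bool → Prop
  | leaf : LeafAt .leaf []
  | left {A B w} : LeafAt A w → LeafAt (.node A B) (false :: w)
  | right {A B w} : LeafAt B w → LeafAt (.node A B) (true :: w)

/-- Labelling of the `ℓ`-leaves of a tree by unit types, yielding a type. -/
def labelU : ATree → (List Bool → UTy) → Ty
  | .leaf, f => .unit (f [])
  | .zleaf, _ => .zero
  | .node A B, f => .add (labelU A fun w => f (false :: w)) (labelU B fun w => f (true :: w))

/-- Labelling of the `ℓ`-leaves of a tree by types, yielding a type. -/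
def labelT : ATree → (List Bool → Ty) → Ty
  | .leaf, f => f []
  | .zleaf, _ => .zero
  | .node A B, f => .add (labelT A fun w => f (false :: w)) (labelT B fun w => f (true :: w))

/-- Split an address of a leaf of `A ∘ A'` into the `A`-part and the `A'`-part. -/
def split : ATree → List Bool → List Bool × List Bool
  | .leaf, p => ([], p)
  | .zleaf, p => ([], p)
  | .node A _, false :: p => ((split A p).1.cons false, (split A p).2)
  | .node _ B, true :: p => ((split B p).1.cons true, (split B p).2)
  | .node _ _, [] => ([], [])

end ATree

/-- Typing derivations of the structured type system Add_struct. -/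
inductive SDeriv : List UTy → Tm → Ty → Type
  | ax (Γ : List UTy) (n : ℕ) (U : UTy) (h : Γ[n]? = some U) : SDeriv Γ (.var n) (.unit U)
  | axZero (Γ : List UTy) : SDeriv Γ .zero .zero
  | arrI {Γ U t T} (D : SDeriv (U :: Γ) t T) : SDeriv Γ (.lam t) (.unit (.arrow U T))
  | addI {Γ t u T R} (D₁ : SDeriv Γ t T) (D₂ : SDeriv Γ u R) :
      SDeriv Γ (.add t u) (.add T R)
  | allE {Γ t U} (V : UTy) (D : SDeriv Γ t (.unit (.all U))) :
      SDeriv Γ t (.unit (UTy.subst 0 V U))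
  | allI {Γ t U} (D : SDeriv (liftCtx Γ) t (.unit U)) : SDeriv Γ t (.unit (.all U))
  | arrE {Γ t u} (A A' : ATree) (k : ℕ) (U : UTy) (Tf : List Bool → Ty)
      (Vf : List Bool → List UTy)
      (hlen : ∀ v, A'.LeafAt v → (Vf v).length = k)
      (D₁ : SDeriv Γ t (A.labelU fun w => allN k (.arrow U (Tf w))))
      (D₂ : SDeriv Γ u (A'.labelU fun v => UTy.msubst (Vf v) U)) :
      SDeriv Γ (.app t u)
        ((A.comp A').labelT fun p => Ty.msubst (Vf (A.split p).2) (Tf (A.split p).1))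

/-! ## System F with pairs -/

/-- Terms of System F with pairs. -/
inductive FTm : Type
  | var : ℕ → FTm
  | lam : FTm → FTm
  | app : FTm → FTm → FTm
  | star : FTm
  | pair : FTm → FTm → FTm
  | pl : FTm → FTm
  | pr : FTm → FTm
  deriving DecidableEq

/-- Types of System F with pairs. -/
inductive FTy : Type
  | var : ℕ → FTy
  | arrow : FTy → FTy → FTy
  | all : FTy → FTy
  | one : FTy
  | prod : FTy → FTy → FTy
  deriving DecidableEq

/-- Shifting of term variables in F-terms. -/
def FTm.shift (d c : ℕ) : FTm → FTm
  | .var n => if n < c then .var n else .var (n + d)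
  | .lam t => .lam (FTm.shift d (c + 1) t)
  | .app t u => .app (FTm.shift d c t) (FTm.shift d c u)
  | .star => .star
  | .pair t u => .pair (FTm.shift d c t) (FTm.shift d c u)
  | .pl t => .pl (FTm.shift d c t)
  | .pr t => .pr (FTm.shift d c t)

/-- Substitution of the term variable `k` by `v` in an F-term. -/
def FTm.subst (k : ℕ) (v : FTm) : FTm → FTm
  | .var n => if n = k then FTm.shift k 0 v else if k < n then .var (n - 1) else .var n
  | .lam t => .lam (FTm.subst (k + 1) v t)
  | .app t u => .app (FTm.subst k v t) (FTm.subst k v u)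
  | .star => .star
  | .pair t u => .pair (FTm.subst k v t) (FTm.subst k v u)
  | .pl t => .pl (FTm.subst k v t)
  | .pr t => .pr (FTm.subst k v t)

/-- Shifting of type variables in F-types. -/
def FTy.shift (d c : ℕ) : FTy → FTy
  | .var n => if n < c then .var n else .var (n + d)
  | .arrow A B => .arrow (FTy.shift d c A) (FTy.shift d c B)
  | .all A => .all (FTy.shift d (c + 1) A)
  | .one => .one
  | .prod A B => .prod (FTy.shift d c A) (FTy.shift d c B)

/-- Substitution of the type variable `k` by `B` in an F-type. -/
def FTy.subst (k : ℕ) (B : FTy) : FTy → FTy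
  | .var n => if n = k then FTy.shift k 0 B else if k < n then .var (n - 1) else .var n
  | .arrow A A' => .arrow (FTy.subst k B A) (FTy.subst k B A')
  | .all A => .all (FTy.subst (k + 1) B A)
  | .one => .one
  | .prod A A' => .prod (FTy.subst k B A) (FTy.subst k B A')

/-- One-step reduction in System F with pairs. -/
inductive FStep : FTm → FTm → Prop
  | beta (t u : FTm) : FStep (.app (.lam t) u) (FTm.subst 0 u t)
  | plPair (t u : FTm) : FStep (.pl (.pair t u)) t
  | prPair (t u : FTm) : FStep (.pr (.pair t u)) u
  | eta (t : FTm) : FStep (.lam (.app (FTm.shift 1 0 t) (.var 0))) t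
  | sp (p : FTm) : FStep (.pair (.pl p) (.pr p)) p
  | lamCongr : FStep t t' → FStep (.lam t) (.lam t')
  | appLeft : FStep t t' → FStep (.app t u) (.app t' u)
  | appRight : FStep u u' → FStep (.app t u) (.app t u')
  | pairLeft : FStep t t' → FStep (.pair t u) (.pair t' u)
  | pairRight : FStep u u' → FStep (.pair t u) (.pair t u')
  | plCongr : FStep t t' → FStep (.pl t) (.pl t')
  | prCongr : FStep t t' → FStep (.pr t) (.pr t')

/-- Typing in System F with pairs. -/
inductive FTyping : List FTy → FTm → FTy → Prop
  | ax {Γ n A} : Γ[n]? = some A → FTyping Γ (.var n) A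
  | star {Γ} : FTyping Γ .star .one
  | lam {Γ A t B} : FTyping (A :: Γ) t B → FTyping Γ (.lam t) (.arrow A B)
  | app {Γ t u A B} : FTyping Γ t (.arrow A B) → FTyping Γ u A → FTyping Γ (.app t u) B
  | pair {Γ t u A B} : FTyping Γ t A → FTyping Γ u B → FTyping Γ (.pair t u) (.prod A B)
  | pl {Γ t A B} : FTyping Γ t (.prod A B) → FTyping Γ (.pl t) A
  | pr {Γ t A B} : FTyping Γ t (.prod A B) → FTyping Γ (.pr t) B
  | allI {Γ t A} : FTyping (Γ.map (FTy.shift 1 0)) t A → FTyping Γ t (.all A)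
  | allE {Γ t A} (B : FTy) : FTyping Γ t (.all A) → FTyping Γ t (FTy.subst 0 B A)

/-! ## The translation from Add_struct into System F with pairs -/

mutual
  /-- Translation of unit types into F-types. -/
  def transU : UTy → FTy
    | .var n => .var n
    | .arrow U T => .arrow (transU U) (transT T)
    | .all U => .all (transU U)

  /-- Translation of Add types into F-types. -/
  def transT : Ty → FTy
    | .unit U => transU U
    | .add T R => .prod (transT T) (transT R)
    | .zero => .one
end

/-- Labelling of the `ℓ`-leaves of a tree by F-terms (pairs at the nodes, `⋆`
at the `𝟘`-leaves), yielding an F-term. -/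
def ATree.labelF : ATree → (List Bool → FTm) → FTm
  | .leaf, f => f []
  | .zleaf, _ => .star
  | .node A B, f => .pair (ATree.labelF A fun w => f (false :: w))
      (ATree.labelF B fun w => f (true :: w))

/-- `π_{w̄}(t)`: the composite of projections along the mirror of the word `w`. -/
def projMirror (w : List Bool) (t : FTm) : FTm :=
  w.foldl (fun s b => if b then .pr s else .pl s) t

/-- The translation `|t|_D` of a term typed in Add_struct by a derivation `D`
into an F-term. -/
def transD : ∀ {Γ : List UTy} {t : Tm} {T : Ty}, SDeriv Γ t T → FTm
  | _, _, _, .ax _ n _ _ => .var n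
  | _, _, _, .axZero _ => .star
  | _, _, _, .arrI D => .lam (transD D)
  | _, _, _, .addI D₁ D₂ => .pair (transD D₁) (transD D₂)
  | _, _, _, .allE _ D => transD D
  | _, _, _, .allI D => transD D
  | _, _, _, .arrE A A' _ _ _ _ _ D₁ D₂ =>
      (A.comp A').labelF fun p =>
        .app (projMirror (A.split p).1 (transD D₁)) (projMirror (A.split p).2 (transD D₂))

/-! ## Structural reduction (without AC and without the rule `t+𝟎 → t`) -/

/-- One-step reduction by a rule other than `t+𝟎 → t` (and not using the
AC-equivalence, which is absent from Add_struct). -/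
inductive SStep : Tm → Tm → Prop
  | distrRight (t u s : Tm) : SStep (.app (.add t u) s) (.add (.app t s) (.app u s))
  | distrLeft (t u s : Tm) : SStep (.app t (.add u s)) (.add (.app t u) (.app t s))
  | zeroApp (t : Tm) : SStep (.app .zero t) .zero
  | appZero (t : Tm) : SStep (.app t .zero) .zero
  | beta (t v : Tm) : IsValue v → SStep (.app (.lam t) v) (Tm.subst 0 v t)
  | appLeft : SStep t t' → SStep (.app t u) (.app t' u)
  | appRight : SStep u u' → SStep (.app t u) (.app t u')
  | addLeft : SStep t t' → SStep (.add t u) (.add t' u)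
  | addRight : SStep u u' → SStep (.add t u) (.add t u')
  | lamCongr : SStep t t' → SStep (.lam t) (.lam t')

/-! ## The partial inverse translation -/

/-- Partial inverse translation on types. -/
def invTy : FTy → Option Ty
  | .var n => some (.unit (.var n))
  | .one => some .zero
  | .all A =>
    match invTy A with
    | some (.unit U) => some (.unit (.all U))
    | _ => none
  | .prod A B =>
    match invTy A, invTy B with
    | some T, some R => some (.add T R)
    | _, _ => none
  | .arrow A B =>
    match invTy A, invTy B with
    | some (.unit U), some T => some (.unit (.arrow U T))
    | _, _ => none

/-- An F-term of the shape `A[wv ↦ π_{w̄}(t) π_{v̄}(u)]` for a non-trivial tree. -/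
def IsTreeApp (s : FTm) : Prop :=
  ∃ (A A' : ATree) (t u : FTm), A.comp A' ≠ .leaf ∧ A.comp A' ≠ .zleaf ∧
    s = (A.comp A').labelF fun p =>
      .app (projMirror (A.split p).1 t) (projMirror (A.split p).2 u)

/-- The partial inverse translation on F-terms, as a relation. -/
inductive InvTm : FTm → Tm → Prop
  | var (n : ℕ) : InvTm (.var n) (.var n)
  | star : InvTm .star .zero
  | lam : InvTm t t' → InvTm (.lam t) (.lam t')
  | app : InvTm t t' → InvTm u u' → InvTm (.app t u) (.app t' u')
  | treeApp (A A' : ATree) {t u : FTm} {t' u' : Tm} :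
      A.comp A' ≠ .leaf → A.comp A' ≠ .zleaf → InvTm t t' → InvTm u u' →
      InvTm ((A.comp A').labelF fun p =>
          .app (projMirror (A.split p).1 t) (projMirror (A.split p).2 u))
        (.app t' u')
  | pair : ¬ IsTreeApp (.pair t u) → InvTm t t' → InvTm u u' →
      InvTm (.pair t u) (.add t' u')

/-! Both parts go by induction on the typing derivation. For (1) the delicate rules are (∀E)
and (→E), whose conclusions instantiate bound type variables: replacing a free variable commutes
with instantiation, with `∀`-quantified prefixes and with the lifting of contexts in (∀I), and
these laws alone make a type transformation preserve typing (`Typing.map`). Shifting satisfies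
the same laws, which is what (2) needs in the (∀I) case, where the type of `v` must be lifted;
otherwise (2) is the usual substitution argument, with weakening at the substituted variable. -/

/-! ## De Bruijn arithmetic of type shifting and substitution -/

mutual
theorem UTy.shift_shift_add : ∀ (A : UTy) (d k b c : ℕ), b ≤ c → c ≤ b + k →
    UTy.shift d c (UTy.shift k b A) = UTy.shift (k + d) b A
  | .var n, d, k, b, c, _, _ => by
      simp only [UTy.shift]
      split_ifs <;> simp only [UTy.shift] <;> split_ifs <;>
        first | rfl | (exfalso; omega) | (congr 1; omega)
  | .arrow U T, d, k, b, c, h₁, h₂ => by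
      simp only [UTy.shift, UTy.shift_shift_add U d k b c h₁ h₂,
        Ty.shift_shift_add T d k b c h₁ h₂]
  | .all U, d, k, b, c, h₁, h₂ => by
      simp only [UTy.shift, UTy.shift_shift_add U d k (b + 1) (c + 1) (by omega) (by omega)]
theorem Ty.shift_shift_add : ∀ (A : Ty) (d k b c : ℕ), b ≤ c → c ≤ b + k →
    Ty.shift d c (Ty.shift k b A) = Ty.shift (k + d) b A
  | .unit U, d, k, b, c, h₁, h₂ => by
      simp only [Ty.shift, UTy.shift_shift_add U d k b c h₁ h₂]
  | .add T R, d, k, b, c, h₁, h₂ => by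
      simp only [Ty.shift, Ty.shift_shift_add T d k b c h₁ h₂,
        Ty.shift_shift_add R d k b c h₁ h₂]
  | .zero, _, _, _, _, _, _ => rfl
end

mutual
theorem UTy.shift_shift_comm : ∀ (A : UTy) (d d' c c' : ℕ), c ≤ c' →
    UTy.shift d' (c' + d) (UTy.shift d c A) = UTy.shift d c (UTy.shift d' c' A)
  | .var n, d, d', c, c', _ => by
      simp only [UTy.shift]
      split_ifs <;> simp only [UTy.shift] <;> split_ifs <;>
        first | rfl | (exfalso; omega) | (congr 1; omega)
  | .arrow U T, d, d', c, c', h => by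
      simp only [UTy.shift, UTy.shift_shift_comm U d d' c c' h, Ty.shift_shift_comm T d d' c c' h]
  | .all U, d, d', c, c', h => by
      have := UTy.shift_shift_comm U d d' (c + 1) (c' + 1) (by omega)
      simp only [UTy.shift, ← this, Nat.add_right_comm c' 1 d]
theorem Ty.shift_shift_comm : ∀ (A : Ty) (d d' c c' : ℕ), c ≤ c' →
    Ty.shift d' (c' + d) (Ty.shift d c A) = Ty.shift d c (Ty.shift d' c' A)
  | .unit U, d, d', c, c', h => by simp only [Ty.shift, UTy.shift_shift_comm U d d' c c' h]
  | .add T R, d, d', c, c', h => by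
      simp only [Ty.shift, Ty.shift_shift_comm T d d' c c' h, Ty.shift_shift_comm R d d' c c' h]
  | .zero, _, _, _, _, _ => rfl
end

mutual
theorem UTy.subst_shift_cancel : ∀ (A W : UTy) (k c d : ℕ), c ≤ k → k ≤ c + d →
    UTy.subst k W (UTy.shift (d + 1) c A) = UTy.shift d c A
  | .var n, W, k, c, d, _, _ => by
      simp only [UTy.shift]
      split_ifs <;> simp only [UTy.subst] <;> split_ifs <;> first | rfl | (exfalso; omega)
  | .arrow U T, W, k, c, d, h₁, h₂ => by
      simp only [UTy.shift, UTy.subst, UTy.subst_shift_cancel U W k c d h₁ h₂,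
        Ty.subst_shift_cancel T W k c d h₁ h₂]
  | .all U, W, k, c, d, h₁, h₂ => by
      simp only [UTy.shift, UTy.subst,
        UTy.subst_shift_cancel U W (k + 1) (c + 1) d (by omega) (by omega)]
theorem Ty.subst_shift_cancel : ∀ (A : Ty) (W : UTy) (k c d : ℕ), c ≤ k → k ≤ c + d →
    Ty.subst k W (Ty.shift (d + 1) c A) = Ty.shift d c A
  | .unit U, W, k, c, d, h₁, h₂ => by
      simp only [Ty.shift, Ty.subst, UTy.subst_shift_cancel U W k c d h₁ h₂]
  | .add T R, W, k, c, d, h₁, h₂ => by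
      simp only [Ty.shift, Ty.subst, Ty.subst_shift_cancel T W k c d h₁ h₂,
        Ty.subst_shift_cancel R W k c d h₁ h₂]
  | .zero, _, _, _, _, _, _ => rfl
end

mutual
theorem UTy.shift_subst : ∀ (A V : UTy) (d k j : ℕ),
    UTy.shift d (k + j) (UTy.subst k V A)
      = UTy.subst k (UTy.shift d j V) (UTy.shift d (k + j + 1) A)
  | .var n, V, d, k, j => by
      simp only [UTy.subst, UTy.shift]
      split_ifs <;> simp only [UTy.subst, UTy.shift] <;> split_ifs <;>
        first | rfl | (exfalso; omega) | (congr 1; omega) |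
          simpa only [Nat.add_comm j k] using UTy.shift_shift_comm V k d 0 j (Nat.zero_le j)
  | .arrow U T, V, d, k, j => by
      simp only [UTy.subst, UTy.shift, UTy.shift_subst U V d k j, Ty.shift_subst T V d k j]
  | .all U, V, d, k, j => by
      have := UTy.shift_subst U V d (k + 1) j
      simp only [UTy.subst, UTy.shift, Nat.add_right_comm k 1 j] at this ⊢
      rw [this]
theorem Ty.shift_subst : ∀ (A : Ty) (V : UTy) (d k j : ℕ),
    Ty.shift d (k + j) (Ty.subst k V A)
      = Ty.subst k (UTy.shift d j V) (Ty.shift d (k + j + 1) A)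
  | .unit U, V, d, k, j => by simp only [Ty.subst, Ty.shift, UTy.shift_subst U V d k j]
  | .add T R, V, d, k, j => by
      simp only [Ty.subst, Ty.shift, Ty.shift_subst T V d k j, Ty.shift_subst R V d k j]
  | .zero, _, _, _, _ => rfl
end

mutual
theorem UTy.shift_replAux : ∀ (A : UTy) (d c' c X : ℕ) (U : UTy), c' ≤ c →
    UTy.shift d c' (UTy.replAux X U c A) = UTy.replAux X U (c + d) (UTy.shift d c' A)
  | .var n, d, c', c, X, U, h => by
      simp only [UTy.replAux, UTy.shift]
      split_ifs <;> simp only [UTy.replAux, UTy.shift] <;> split_ifs <;>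
        first | rfl | (exfalso; omega) | (congr 1; omega) |
          exact UTy.shift_shift_add U d c 0 c' (Nat.zero_le c') (by omega)
  | .arrow U' T, d, c', c, X, U, h => by
      simp only [UTy.replAux, UTy.shift, UTy.shift_replAux U' d c' c X U h,
        Ty.shift_replAux T d c' c X U h]
  | .all U', d, c', c, X, U, h => by
      have := UTy.shift_replAux U' d (c' + 1) (c + 1) X U (by omega)
      simp only [UTy.replAux, UTy.shift, this, Nat.add_right_comm c 1 d]
theorem Ty.shift_replAux : ∀ (A : Ty) (d c' c X : ℕ) (U : UTy), c' ≤ c →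
    Ty.shift d c' (Ty.replAux X U c A) = Ty.replAux X U (c + d) (Ty.shift d c' A)
  | .unit U', d, c', c, X, U, h => by
      simp only [Ty.replAux, Ty.shift, UTy.shift_replAux U' d c' c X U h]
  | .add T R, d, c', c, X, U, h => by
      simp only [Ty.replAux, Ty.shift, Ty.shift_replAux T d c' c X U h,
        Ty.shift_replAux R d c' c X U h]
  | .zero, _, _, _, _, _, _ => rfl
end

mutual
theorem UTy.replAux_subst : ∀ (A V : UTy) (k j X : ℕ) (U : UTy),
    UTy.replAux X U (k + j) (UTy.subst k V A)
      = UTy.subst k (UTy.replAux X U j V) (UTy.replAux X U (k + j + 1) A)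
  | .var n, V, k, j, X, U => by
      simp only [UTy.subst, UTy.replAux]
      split_ifs <;> (try simp only [UTy.subst, UTy.replAux]) <;> (try split_ifs) <;>
        first | rfl | (exfalso; omega) |
          simpa only [Nat.add_comm j k] using (UTy.shift_replAux V k 0 j X U (Nat.zero_le j)).symm |
          exact (UTy.subst_shift_cancel U _ k 0 (k + j) (Nat.zero_le k) (by omega)).symm
  | .arrow U' T, V, k, j, X, U => by
      simp only [UTy.subst, UTy.replAux, UTy.replAux_subst U' V k j X U,
        Ty.replAux_subst T V k j X U]
  | .all U', V, k, j, X, U => by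
      have := UTy.replAux_subst U' V (k + 1) j X U
      simp only [UTy.subst, UTy.replAux, Nat.add_right_comm k 1 j] at this ⊢
      rw [this]
theorem Ty.replAux_subst : ∀ (A : Ty) (V : UTy) (k j X : ℕ) (U : UTy),
    Ty.replAux X U (k + j) (Ty.subst k V A)
      = Ty.subst k (UTy.replAux X U j V) (Ty.replAux X U (k + j + 1) A)
  | .unit U', V, k, j, X, U => by
      simp only [Ty.subst, Ty.replAux, UTy.replAux_subst U' V k j X U]
  | .add T R, V, k, j, X, U => by
      simp only [Ty.subst, Ty.replAux, Ty.replAux_subst T V k j X U,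
        Ty.replAux_subst R V k j X U]
  | .zero, _, _, _, _, _ => rfl
end

/-! ## Binder-aware transformations of types -/

/-- `onU c` and `onT c` are the action on types that sit under `c` type binders. -/
structure TyTransform where
  onU : ℕ → UTy → UTy
  onT : ℕ → Ty → Ty
  onT_unit (c : ℕ) (U : UTy) : onT c (.unit U) = .unit (onU c U)
  onT_add (c : ℕ) (T R : Ty) : onT c (.add T R) = .add (onT c T) (onT c R)
  onT_zero (c : ℕ) : onT c .zero = .zero
  onU_arrow (c : ℕ) (U : UTy) (T : Ty) : onU c (.arrow U T) = .arrow (onU c U) (onT c T)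
  onU_all (c : ℕ) (U : UTy) : onU c (.all U) = .all (onU (c + 1) U)
  onU_subst (c : ℕ) (V U : UTy) :
    onU c (UTy.subst 0 V U) = UTy.subst 0 (onU c V) (onU (c + 1) U)
  onU_shift (c : ℕ) (U : UTy) : onU (c + 1) (UTy.shift 1 0 U) = UTy.shift 1 0 (onU c U)

namespace TyTransform

variable (F : TyTransform)

theorem onT_subst (c : ℕ) (V : UTy) :
    ∀ T : Ty, F.onT c (Ty.subst 0 V T) = Ty.subst 0 (F.onU c V) (F.onT (c + 1) T)
  | .unit U => by simp only [Ty.subst, onT_unit, onU_subst]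
  | .add T R => by simp only [Ty.subst, onT_add, onT_subst c V T, onT_subst c V R]
  | .zero => by simp only [Ty.subst, onT_zero]

theorem onT_sumT (c : ℕ) (Ts : List Ty) : F.onT c (sumT Ts) = sumT (Ts.map (F.onT c)) := by
  suffices ∀ acc, F.onT c (Ts.foldl Ty.add acc) = (Ts.map (F.onT c)).foldl Ty.add (F.onT c acc) by
    simpa only [sumT, onT_zero] using this .zero
  induction Ts with
  | nil => intro acc; rfl
  | cons T Ts ih => intro acc; simp only [List.foldl, List.map, ih, onT_add]

theorem onU_allN (c : ℕ) (U : UTy) : ∀ k, F.onU c (allN k U) = allN k (F.onU (c + k) U)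
  | 0 => rfl
  | k + 1 => by simp only [allN, onU_all, onU_allN (c + 1) U k, Nat.add_right_comm c 1 k]; rfl

/-- In `UTy.msubst (V :: Vs)`, the type `V` sits under `Vs.length` more binders than the
outer context. -/
def onList (c : ℕ) : List UTy → List UTy
  | [] => []
  | V :: Vs => F.onU (c + Vs.length) V :: onList c Vs

theorem onU_msubst (c : ℕ) :
    ∀ (Vs : List UTy) (U : UTy),
      F.onU c (UTy.msubst Vs U) = UTy.msubst (F.onList c Vs) (F.onU (c + Vs.length) U)
  | [], _ => rfl
  | V :: Vs, U => by
      change F.onU c (UTy.msubst Vs (UTy.subst 0 V U)) = _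
      rw [onU_msubst c Vs, onU_subst]
      rfl

theorem onT_msubst (c : ℕ) :
    ∀ (Vs : List UTy) (T : Ty),
      F.onT c (Ty.msubst Vs T) = Ty.msubst (F.onList c Vs) (F.onT (c + Vs.length) T)
  | [], _ => rfl
  | V :: Vs, T => by
      change F.onT c (Ty.msubst Vs (Ty.subst 0 V T)) = _
      rw [onT_msubst c Vs, onT_subst]
      rfl

theorem length_onList (c : ℕ) : ∀ Vs : List UTy, (F.onList c Vs).length = Vs.length
  | [] => rfl
  | _ :: Vs => congrArg (· + 1) (length_onList c Vs)

theorem map_liftCtx (c : ℕ) (Γ : List UTy) :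
    (liftCtx Γ).map (F.onU (c + 1)) = liftCtx (Γ.map (F.onU c)) := by
  simp only [liftCtx, List.map_map]
  exact List.map_congr_left fun U _ => F.onU_shift c U

end TyTransform

theorem TEq.map (F : TyTransform) {T R : Ty} (h : TEq T R) (c : ℕ) :
    TEq (F.onT c T) (F.onT c R) :=
  TEq.rec (motive_1 := fun U V _ => ∀ c, UEq (F.onU c U) (F.onU c V))
    (motive_2 := fun T R _ => ∀ c, TEq (F.onT c T) (F.onT c R))
    (fun _ _ => .refl _)
    (fun _ ih c => .symm (ih c))
    (fun _ _ ih₁ ih₂ c => .trans (ih₁ c) (ih₂ c))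
    (fun _ _ ih₁ ih₂ c => by rw [F.onU_arrow, F.onU_arrow]; exact .arrow (ih₁ c) (ih₂ c))
    (fun _ ih c => by rw [F.onU_all, F.onU_all]; exact .all (ih (c + 1)))
    (fun _ _ => .refl _)
    (fun _ ih c => .symm (ih c))
    (fun _ _ ih₁ ih₂ c => .trans (ih₁ c) (ih₂ c))
    (fun _ ih c => by rw [F.onT_unit, F.onT_unit]; exact .unit (ih c))
    (fun _ _ ih₁ ih₂ c => by rw [F.onT_add, F.onT_add]; exact .addCongr (ih₁ c) (ih₂ c))
    (fun _ _ c => by rw [F.onT_add, F.onT_add]; exact .comm _ _)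
    (fun _ _ _ c => by simp only [F.onT_add]; exact .assoc _ _ _)
    (fun _ c => by rw [F.onT_add, F.onT_zero]; exact .zero _)
    h c

theorem Typing.map (F : TyTransform) {Γ : List UTy} {t : Tm} {T : Ty} (h : Typing Γ t T)
    (c : ℕ) : Typing (Γ.map (F.onU c)) t (F.onT c T) := by
  induction h generalizing c with
  | ax hn => rw [F.onT_unit]; exact .ax (by simp [hn])
  | axZero => rw [F.onT_zero]; exact .axZero
  | equiv _ hTR ih => exact (ih c).equiv (hTR.map F c)
  | arrI _ ih => rw [F.onT_unit, F.onU_arrow]; exact .arrI (ih c)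
  | addI _ _ ih₁ ih₂ => rw [F.onT_add]; exact .addI (ih₁ c) (ih₂ c)
  | allE V _ ih =>
      rw [F.onT_unit, F.onU_subst]
      exact .allE _ (by simpa only [F.onT_unit, F.onU_all] using ih c)
  | allI _ ih =>
      rw [F.onT_unit, F.onU_all]
      exact .allI (by simpa only [F.map_liftCtx, F.onT_unit] using ih (c + 1))
  | @arrE Γ t u k U Ts Vs hTs hVs hlen _ _ ih₁ ih₂ =>
      have hU : ∀ Vj ∈ Vs, F.onT c (.unit (UTy.msubst Vj U))
          = .unit (UTy.msubst (F.onList c Vj) (F.onU (c + k) U)) := fun Vj hVj => by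
        rw [F.onT_unit, F.onU_msubst, hlen Vj hVj]
      have hT : ∀ Ti, ∀ Vj ∈ Vs, F.onT c (Ty.msubst Vj Ti)
          = Ty.msubst (F.onList c Vj) (F.onT (c + k) Ti) := fun Ti Vj hVj => by
        rw [F.onT_msubst, hlen Vj hVj]
      have h₂ := ih₂ c
      rw [F.onT_sumT, List.map_map, Function.comp_def, List.map_congr_left hU] at h₂
      have := Typing.arrE (Ts := Ts.map (F.onT (c + k))) (Vs := Vs.map (F.onList c))
        (by simpa using hTs) (by simpa using hVs) (by simpa [F.length_onList] using hlen)
        (by simpa [F.onT_sumT, Function.comp_def, F.onT_unit, F.onU_allN, F.onU_arrow] using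
          ih₁ c)
        (by simpa [Function.comp_def] using h₂)
      rw [F.onT_sumT, List.map_flatten]
      simpa [Function.comp_def, List.map_congr_left (hT _)] using this

def TyTransform.shift (d : ℕ) : TyTransform where
  onU := UTy.shift d
  onT := Ty.shift d
  onT_unit _ _ := rfl
  onT_add _ _ _ := rfl
  onT_zero _ := rfl
  onU_arrow _ _ _ := rfl
  onU_all _ _ := rfl
  onU_subst c V U := by simpa only [Nat.zero_add] using UTy.shift_subst U V d 0 c
  onU_shift c U := by simpa only [Nat.zero_add] using UTy.shift_shift_comm U 1 d 0 c c.zero_le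

def TyTransform.repl (X : ℕ) (V : UTy) : TyTransform where
  onU := UTy.replAux X V
  onT := Ty.replAux X V
  onT_unit _ _ := rfl
  onT_add _ _ _ := rfl
  onT_zero _ := rfl
  onU_arrow _ _ _ := rfl
  onU_all _ _ := rfl
  onU_subst c W U := by simpa only [Nat.zero_add] using UTy.replAux_subst U W 0 c X V
  onU_shift c U := (UTy.shift_replAux U 1 0 c X V c.zero_le).symm

/-! ## Weakening and substitution of term variables -/

theorem liftCtx_append (Γ Δ : List UTy) : liftCtx (Γ ++ Δ) = liftCtx Γ ++ liftCtx Δ :=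
  List.map_append ..

theorem length_liftCtx (Γ : List UTy) : (liftCtx Γ).length = Γ.length :=
  List.length_map ..

theorem Typing.weaken {Γ₁ Γ₂ : List UTy} {t : Tm} {T : Ty} (h : Typing (Γ₁ ++ Γ₂) t T)
    (Δ : List UTy) : Typing (Γ₁ ++ Δ ++ Γ₂) (Tm.shift Δ.length Γ₁.length t) T := by
  generalize hΓ : Γ₁ ++ Γ₂ = Γ at h
  induction h generalizing Γ₁ Γ₂ Δ with
  | @ax Γ n U hn =>
      subst hΓ
      by_cases hlt : n < Γ₁.length
      · rw [List.getElem?_append_left hlt] at hn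
        simp only [Tm.shift, if_pos hlt]
        exact .ax (by rwa [List.append_assoc, List.getElem?_append_left hlt])
      · rw [List.getElem?_append_right (by omega)] at hn
        simp only [Tm.shift, if_neg hlt]
        refine .ax ?_
        rwa [List.getElem?_append_right (by simp; omega), List.length_append,
          show n + Δ.length - (Γ₁.length + Δ.length) = n - Γ₁.length by omega]
  | axZero => exact .axZero
  | equiv _ hTR ih => exact (ih Δ hΓ).equiv hTR
  | arrI _ ih => subst hΓ; exact .arrI (ih (Γ₁ := _ :: Γ₁) Δ rfl)
  | addI _ _ ih₁ ih₂ => exact .addI (ih₁ Δ hΓ) (ih₂ Δ hΓ)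
  | allE V _ ih => exact .allE V (ih Δ hΓ)
  | allI _ ih =>
      subst hΓ
      have := ih (Γ₁ := liftCtx Γ₁) (Γ₂ := liftCtx Γ₂) (liftCtx Δ)
        (liftCtx_append Γ₁ Γ₂).symm
      rw [length_liftCtx, length_liftCtx, ← liftCtx_append, ← liftCtx_append] at this
      exact .allI this
  | arrE hTs hVs hlen _ _ ih₁ ih₂ => exact .arrE hTs hVs hlen (ih₁ Δ hΓ) (ih₂ Δ hΓ)

theorem Typing.subst {Γ₁ Γ₂ : List UTy} {U : UTy} {t v : Tm} {T : Ty}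
    (h : Typing (Γ₁ ++ U :: Γ₂) t T) (hv : Typing Γ₂ v (.unit U)) :
    Typing (Γ₁ ++ Γ₂) (Tm.subst Γ₁.length v t) T := by
  generalize hΓ : Γ₁ ++ U :: Γ₂ = Γ at h
  induction h generalizing Γ₁ Γ₂ U with
  | @ax Γ n U' hn =>
      subst hΓ
      rcases Nat.lt_trichotomy n Γ₁.length with hlt | rfl | hgt
      · rw [List.getElem?_append_left hlt] at hn
        simp only [Tm.subst, if_neg hlt.ne, if_neg (Nat.lt_asymm hlt)]
        exact .ax (by rwa [List.getElem?_append_left hlt])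
      · simp only [List.getElem?_append_right le_rfl, Nat.sub_self, List.getElem?_cons_zero,
          Option.some.injEq] at hn
        subst hn
        simpa only [Tm.subst, if_pos, List.nil_append, List.length_nil] using
          hv.weaken (Γ₁ := []) Γ₁
      · rw [List.getElem?_append_right hgt.le,
          show n - Γ₁.length = n - 1 - Γ₁.length + 1 by omega] at hn
        simp only [Tm.subst, if_neg hgt.ne', if_pos hgt]
        exact .ax (by rwa [List.getElem?_append_right (by omega)])
  | axZero => exact .axZero
  | equiv _ hTR ih => exact (ih hv hΓ).equiv hTR
  | arrI _ ih => subst hΓ; exact .arrI (ih (Γ₁ := _ :: Γ₁) hv rfl)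
  | addI _ _ ih₁ ih₂ => exact .addI (ih₁ hv hΓ) (ih₂ hv hΓ)
  | allE V _ ih => exact .allE V (ih hv hΓ)
  | allI _ ih =>
      subst hΓ
      have := ih (Γ₁ := liftCtx Γ₁) (Γ₂ := liftCtx Γ₂) (hv.map (.shift 1) 0)
        (liftCtx_append Γ₁ (U :: Γ₂)).symm
      rw [length_liftCtx, ← liftCtx_append] at this
      exact .allI this
  | arrE hTs hVs hlen _ _ ih₁ ih₂ => exact .arrE hTs hVs hlen (ih₁ hv hΓ) (ih₂ hv hΓ)

/-- **Substitution lemma** (Lemma 8).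
(1) If `Γ ⊢ t : T` then `Γ[U/X] ⊢ t : T[U/X]`.
(2) If `Γ, x:U ⊢ t : T` and `Γ ⊢ v : U` with `v` a value, then
`Γ ⊢ t[v/x] : T`. -/
theorem substitution_lemma :
    (∀ (Γ : List UTy) (t : Tm) (T : Ty) (X : ℕ) (U : UTy),
      Typing Γ t T → Typing (Γ.map (UTy.repl X U)) t (Ty.repl X U T)) ∧
    (∀ (Γ : List UTy) (t v : Tm) (U : UTy) (T : Ty), Tm.IsValue v →
      Typing (U :: Γ) t T → Typing Γ v (.unit U) →
      Typing Γ (Tm.subst 0 v t) T) :=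
  ⟨fun _ _ _ X U h => h.map (.repl X U) 0,
    fun _ _ _ _ _ _ ht hv => ht.subst (Γ₁ := []) hv⟩
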